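/- arXiv:1305.6215 — 3 statements merged into one kernel-verified Lean document; each statement's English description precedes it below -/
import Mathlib

section
/- q-Cramér-Rao inequality (one dimension): let g be a continuously differentiable, strictly positive probability density on ℝ, q > 0 with M_q[g] = ∫ g^q finite, α, β > 1 Hölder conjugate, and suppose x g(x)^q → 0 at ±∞. Define the generalized Fisher information I_{β,q}[g] = M_q[g]^{−β} ∫ g(x)^{β(q−1)+1} |g'(x)/g(x)|^β dx. Then q E_g[|X|^α]^{1/α} · I_{β,q}[g]^{1/β} ≥ 1. -/
open MeasureTheory

/-- One-dimensional q-Cramér–Rao inequality: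
q · E_g[|X|^α]^{1/α} · I_{β,q}[g]^{1/β} ≥ 1 where
I_{β,q}[g] = M_q[g]^{−β} ∫ g^{β(q−1)+1} |g'/g|^β. -/
theorem q_cramer_rao_one_dim
    (g : ℝ → ℝ) (q α β : ℝ)
    (hq : 0 < q) (hα : 1 < α) (hβ : 1 < β) (hconj : 1/α + 1/β = 1)
    (hg_pos : ∀ x, 0 < g x)
    (hg_smooth : ContDiff ℝ 1 g)
    (hg_dens : ∫ x, g x = 1)
    (hMq_int : Integrable (fun x => g x ^ q))
    (h_decay_top : Filter.Tendsto (fun x => x * g x ^ q) Filter.atTop (nhds 0))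
    (h_decay_bot : Filter.Tendsto (fun x => x * g x ^ q) Filter.atBot (nhds 0))
    (h_mom_int : Integrable (fun x => |x| ^ α * g x))
    (h_fish_int : Integrable (fun x =>
      g x ^ (β * (q - 1) + 1) * |deriv g x / g x| ^ β)) :
    q * (∫ x, |x| ^ α * g x) ^ (1/α) *
      ((∫ x, g x ^ (β * (q - 1) + 1) * |deriv g x / g x| ^ β) /
        (∫ x, g x ^ q) ^ β) ^ (1/β) ≥ 1 := by
  have hα0 : (0:ℝ) < α := lt_trans one_pos hα
  have hβ0 : (0:ℝ) < β := lt_trans one_pos hβ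
  have hconj' : Real.HolderConjugate α β :=
    ⟨by rw [inv_eq_one_div, inv_eq_one_div, inv_one]; exact hconj, hα0, hβ0⟩
  set G := deriv g with hG
  have hgd : ∀ x, HasDerivAt g (G x) x := fun x =>
    (hg_smooth.differentiable one_ne_zero x).hasDerivAt
  have hGcont : Continuous G := hg_smooth.continuous_deriv le_rfl
  have hgcont : Continuous g := hg_smooth.continuous
  have hgne : ∀ x, g x ≠ 0 := fun x => (hg_pos x).ne'
  set u : ℝ → ℝ := fun x => |x| * g x ^ (1/α) with hu
  set v : ℝ → ℝ := fun x => g x ^ (q - 1/α) * |G x / g x| with hv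
  have hu_nn : ∀ x, 0 ≤ u x := fun x =>
    mul_nonneg (abs_nonneg x) (Real.rpow_nonneg (hg_pos x).le _)
  have hv_nn : ∀ x, 0 ≤ v x := fun x =>
    mul_nonneg (Real.rpow_nonneg (hg_pos x).le _) (abs_nonneg _)
  have huα : ∀ x, u x ^ α = |x| ^ α * g x := by
    intro x
    rw [hu, Real.mul_rpow (abs_nonneg x) (Real.rpow_nonneg (hg_pos x).le _),
      ← Real.rpow_mul (hg_pos x).le, one_div_mul_cancel hα0.ne', Real.rpow_one]
  have hvβ : ∀ x, v x ^ β = g x ^ (β * (q - 1) + 1) * |G x / g x| ^ β := by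
    intro x
    rw [hv, Real.mul_rpow (Real.rpow_nonneg (hg_pos x).le _) (abs_nonneg _),
      ← Real.rpow_mul (hg_pos x).le]
    congr 2
    have h1α : 1/α = 1 - 1/β := by linarith
    rw [h1α]
    field_simp
    ring
  have huv : ∀ x, u x * v x = |x| * (g x ^ (q-1) * |G x|) := by
    intro x
    have h1 : |G x / g x| = |G x| / g x := by
      rw [abs_div, abs_of_pos (hg_pos x)]
    have h2 : g x ^ (1/α) * g x ^ (q - 1/α) = g x ^ q := by
      rw [← Real.rpow_add (hg_pos x)]; ring_nf
    have h3 : g x ^ q / g x = g x ^ (q - 1) := by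
      rw [Real.rpow_sub (hg_pos x), Real.rpow_one]
    calc u x * v x = (g x ^ (1/α) * g x ^ (q - 1/α)) * (|x| * (|G x| / g x)) := by
          show |x| * g x ^ (1/α) * (g x ^ (q - 1/α) * |G x / g x|) = _
          rw [h1]; ring
      _ = |x| * (g x ^ (q-1) * |G x|) := by
          rw [h2, ← h3]; ring
  -- w = x * (g^q)'
  set w : ℝ → ℝ := fun x => x * (q * g x ^ (q-1) * G x) with hw
  have hwabs : ∀ x, |w x| = q * (u x * v x) := by
    intro x
    rw [hw, huv x, abs_mul, abs_mul, abs_mul,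
      abs_of_pos hq, abs_of_pos (Real.rpow_pos_of_pos (hg_pos x) _)]
    ring
  have hucont : Continuous u :=
    continuous_abs.mul (hgcont.rpow_const fun x => Or.inl (hgne x))
  have hvcont : Continuous v :=
    (hgcont.rpow_const fun x => Or.inl (hgne x)).mul
      (continuous_abs.comp (hGcont.div hgcont hgne))
  have huα_int : Integrable (fun x => u x ^ α) :=
    h_mom_int.congr (Filter.Eventually.of_forall fun x => (huα x).symm)
  have hvβ_int : Integrable (fun x => v x ^ β) :=
    h_fish_int.congr (Filter.Eventually.of_forall fun x => (hvβ x).symm)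
  have hyoung : ∀ x, u x * v x ≤ u x ^ α / α + v x ^ β / β := fun x =>
    Real.young_inequality_of_nonneg (hu_nn x) (hv_nn x) hconj'
  have huv_int : Integrable (fun x => u x * v x) := by
    refine Integrable.mono' ((huα_int.div_const α).add (hvβ_int.div_const β))
      (hucont.mul hvcont).aestronglyMeasurable
      (Filter.Eventually.of_forall fun x => ?_)
    rw [Real.norm_eq_abs, abs_of_nonneg (mul_nonneg (hu_nn x) (hv_nn x))]
    exact hyoung x
  have hwcont : Continuous w :=
    continuous_id.mul ((continuous_const.mul
      (hgcont.rpow_const fun x => Or.inl (hgne x))).mul hGcont)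
  have hw_int : Integrable w := by
    refine Integrable.mono' (huv_int.const_mul q) hwcont.aestronglyMeasurable
      (Filter.Eventually.of_forall fun x => ?_)
    rw [Real.norm_eq_abs, hwabs x]
  -- integration by parts
  have hFderiv : ∀ x, HasDerivAt (fun y => y * g y ^ q) (g x ^ q + w x) x := by
    intro x
    have h1 : HasDerivAt (fun y => g y ^ q) (G x * q * g x ^ (q-1)) x :=
      (hgd x).rpow_const (Or.inl (hgne x))
    have h2 : HasDerivAt (fun y => y * g y ^ q) (1 * g x ^ q + x * (G x * q * g x ^ (q-1))) x :=
      (hasDerivAt_id x).mul h1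
    convert h2 using 1
    simp only [hw, id_eq, one_mul]; ring
  have hFint : Integrable (fun x => g x ^ q + w x) := hMq_int.add hw_int
  have hFTC : ∫ x, (g x ^ q + w x) = 0 - 0 :=
    integral_of_hasDerivAt_of_tendsto hFderiv hFint h_decay_bot h_decay_top
  rw [integral_add hMq_int hw_int] at hFTC
  set M := ∫ x, g x ^ q with hM
  set A := ∫ x, |x| ^ α * g x with hA
  set Fi := ∫ x, g x ^ (β * (q - 1) + 1) * |G x / g x| ^ β with hFi
  have hw_eq : ∫ x, w x = -M := by linarith
  have hM_pos : 0 < M := by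
    rw [hM, integral_pos_iff_support_of_nonneg
      (fun x => (Real.rpow_pos_of_pos (hg_pos x) q).le) hMq_int]
    have hsupp : Function.support (fun x => g x ^ q) = Set.univ :=
      Set.eq_univ_of_forall fun x => (Real.rpow_pos_of_pos (hg_pos x) q).ne'
    rw [hsupp]
    simp
  have hA_nn : 0 ≤ A := integral_nonneg fun x =>
    mul_nonneg (Real.rpow_nonneg (abs_nonneg x) α) (hg_pos x).le
  have hFi_nn : 0 ≤ Fi := integral_nonneg fun x =>
    mul_nonneg (Real.rpow_nonneg (hg_pos x).le _) (Real.rpow_nonneg (abs_nonneg _) _)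
  -- MemLp
  have hαne0 : ENNReal.ofReal α ≠ 0 := by
    simp only [ne_eq, ENNReal.ofReal_eq_zero, not_le]; exact hα0
  have hβne0 : ENNReal.ofReal β ≠ 0 := by
    simp only [ne_eq, ENNReal.ofReal_eq_zero, not_le]; exact hβ0
  have hu_mem : MemLp u (ENNReal.ofReal α) volume := by
    refine (memLp_norm_rpow_iff hucont.aestronglyMeasurable hαne0
      ENNReal.ofReal_ne_top).mp ?_
    rw [ENNReal.div_self hαne0 ENNReal.ofReal_ne_top, ENNReal.toReal_ofReal hα0.le,
      memLp_one_iff_integrable]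
    exact huα_int.congr (Filter.Eventually.of_forall fun x => by
      simp only [Real.norm_eq_abs, abs_of_nonneg (hu_nn x)])
  have hv_mem : MemLp v (ENNReal.ofReal β) volume := by
    refine (memLp_norm_rpow_iff hvcont.aestronglyMeasurable hβne0
      ENNReal.ofReal_ne_top).mp ?_
    rw [ENNReal.div_self hβne0 ENNReal.ofReal_ne_top, ENNReal.toReal_ofReal hβ0.le,
      memLp_one_iff_integrable]
    exact hvβ_int.congr (Filter.Eventually.of_forall fun x => by
      simp only [Real.norm_eq_abs, abs_of_nonneg (hv_nn x)])
  have hHolder : ∫ x, u x * v x ≤ A ^ (1/α) * Fi ^ (1/β) := by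
    have h := integral_mul_le_Lp_mul_Lq_of_nonneg hconj'
      (Filter.Eventually.of_forall hu_nn) (Filter.Eventually.of_forall hv_nn)
      hu_mem hv_mem
    rwa [integral_congr_ae (Filter.Eventually.of_forall huα),
      integral_congr_ae (Filter.Eventually.of_forall hvβ)] at h
  have hM_le : M ≤ q * (A ^ (1/α) * Fi ^ (1/β)) := by
    have h1 : M = -∫ x, w x := by rw [hw_eq]; ring
    have h3 : |∫ x, w x| ≤ ∫ x, |w x| := by
      simpa [Real.norm_eq_abs] using norm_integral_le_integral_norm w
    have h4 : ∫ x, |w x| = q * ∫ x, u x * v x := by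
      rw [← MeasureTheory.integral_const_mul]
      exact integral_congr_ae (Filter.Eventually.of_forall hwabs)
    calc M = -∫ x, w x := h1
      _ ≤ |∫ x, w x| := neg_le_abs _
      _ ≤ ∫ x, |w x| := h3
      _ = q * ∫ x, u x * v x := h4
      _ ≤ q * (A ^ (1/α) * Fi ^ (1/β)) :=
        mul_le_mul_of_nonneg_left hHolder hq.le
  -- final arithmetic
  rw [ge_iff_le, Real.div_rpow hFi_nn (Real.rpow_nonneg hM_pos.le β)]
  have hMββ : (M ^ β) ^ (1/β) = M := by
    rw [← Real.rpow_mul hM_pos.le, mul_one_div_cancel hβ0.ne', Real.rpow_one]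
  rw [hMββ]
  have heq : q * A ^ (1/α) * (Fi ^ (1/β) / M) = q * (A ^ (1/α) * Fi ^ (1/β)) / M := by
    ring
  rw [heq, le_div_iff₀ hM_pos, one_mul]
  exact hM_le
end

section
/- Equality in the q-Cramér-Rao inequality for generalized q-Gaussians: let q > 1, α > 1 with Hölder conjugate β, γ > 0, and let g(x) = C (1 − γ|x|^α)_+^{1/(q−1)} be the normalized generalized q-Gaussian on ℝ. Then g achieves equality in the one-dimensional q-Cramér-Rao inequality: q E_g[|X|^α]^{1/α} · I_{β,q}[g]^{1/β} = 1. -/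
open MeasureTheory

private lemma psi_hasDerivAt {s : ℝ} (hs : 1 < s) (t : ℝ) :
    HasDerivAt (fun t : ℝ => max t 0 ^ s) (s * max t 0 ^ (s - 1)) t := by
  rcases lt_trichotomy t 0 with ht | ht | ht
  · have h0 : max t 0 = 0 := max_eq_right ht.le
    have : (fun t : ℝ => max t 0 ^ s) =ᶠ[nhds t] fun _ => (0:ℝ) ^ s := by
      filter_upwards [eventually_lt_nhds ht] with y hy
      rw [max_eq_right hy.le]
    rw [h0, Real.zero_rpow (by linarith), mul_zero]
    exact (hasDerivAt_const t ((0:ℝ) ^ s)).congr_of_eventuallyEq this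
  · subst ht
    have h0 : max (0:ℝ) 0 = 0 := max_self 0
    rw [h0, Real.zero_rpow (by linarith), mul_zero]
    rw [hasDerivAt_iff_tendsto_slope]
    have hb : ∀ y : ℝ, y ≠ 0 → |slope (fun t : ℝ => max t 0 ^ s) 0 y| ≤ |y| ^ (s-1) := by
      intro y hy
      rw [slope_def_field, h0, Real.zero_rpow (by linarith), sub_zero, sub_zero]
      rcases le_or_gt y 0 with h | h
      · rw [max_eq_right h, Real.zero_rpow (by linarith)]
        simp [Real.rpow_nonneg]
      · rw [max_eq_left h.le]
        rw [abs_div, abs_of_nonneg (Real.rpow_nonneg h.le s), abs_of_pos h]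
        rw [div_le_iff₀ h, ← Real.rpow_add_one h.ne']
        rw [sub_add_cancel]
    have hlim : Filter.Tendsto (fun y : ℝ => |y| ^ (s-1)) (nhdsWithin 0 {0}ᶜ) (nhds 0) := by
      have : Filter.Tendsto (fun y : ℝ => |y| ^ (s-1)) (nhds 0) (nhds 0) := by
        have hc : ContinuousAt (fun y : ℝ => |y| ^ (s-1)) 0 := by
          exact (Real.continuousAt_rpow_const _ _ (Or.inr (by linarith))).comp
            continuous_abs.continuousAt
        have := hc.tendsto
        simpa [Real.zero_rpow (show s - 1 ≠ 0 by linarith)] using this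
      exact this.mono_left nhdsWithin_le_nhds
    have h0' : Filter.Tendsto (fun y : ℝ => slope (fun t : ℝ => max t 0 ^ s) 0 y)
        (nhdsWithin 0 {0}ᶜ) (nhds 0) := by
      apply squeeze_zero_norm' _ hlim
      filter_upwards [self_mem_nhdsWithin] with y hy
      exact hb y hy
    simpa using h0'
  · have : (fun t : ℝ => max t 0 ^ s) =ᶠ[nhds t] fun y => y ^ s := by
      filter_upwards [eventually_gt_nhds ht] with y hy
      rw [max_eq_left hy.le]
    have h := Real.hasDerivAt_rpow_const (p := s) (Or.inl ht.ne')
    rw [max_eq_left ht.le]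
    exact h.congr_of_eventuallyEq this

private lemma abs_rpow_hasDerivAt {α : ℝ} (hα : 1 < α) (x : ℝ) :
    HasDerivAt (fun x : ℝ => |x| ^ α)
      (α * max x 0 ^ (α - 1) - α * max (-x) 0 ^ (α - 1)) x := by
  have h1 := psi_hasDerivAt hα x
  have h2 : HasDerivAt (fun y : ℝ => max (-y) 0 ^ α) (-(α * max (-x) 0 ^ (α - 1))) x := by
    have h := (psi_hasDerivAt hα (-x)).comp x (hasDerivAt_neg x)
    have h' : HasDerivAt (fun y : ℝ => max (-y) 0 ^ α)
        (α * max (-x) 0 ^ (α - 1) * (-1)) x := by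
      simpa [Function.comp_def] using h
    convert h' using 1; ring
  have h3 := h1.add h2
  have hfe : (fun y : ℝ => |y| ^ α) = fun y : ℝ => max y 0 ^ α + max (-y) 0 ^ α := by
    funext y
    rcases le_or_gt 0 y with h | h
    · rw [abs_of_nonneg h, max_eq_left h, max_eq_right (neg_nonpos.mpr h),
        Real.zero_rpow (by linarith), add_zero]
    · rw [abs_of_neg h, max_eq_right h.le, max_eq_left (neg_nonneg.mpr h.le),
        Real.zero_rpow (by linarith), zero_add]
  rw [hfe]
  rw [sub_eq_add_neg]; exact h3

/-- The normalized generalized q-Gaussian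
g(x) = C (1 − γ|x|^α)_+^{1/(q−1)} achieves equality in the one-dimensional
q-Cramér–Rao inequality: q E_g[|X|^α]^{1/α} · I_{β,q}[g]^{1/β} = 1. -/
theorem q_gaussian_equality_q_cramer_rao
    (q α β γ C : ℝ)
    (hq : 1 < q) (hα : 1 < α) (hβ : 1 < β) (hconj : 1/α + 1/β = 1)
    (hγ : 0 < γ) (hC : 0 < C)
    (g : ℝ → ℝ)
    (hg_def : ∀ x, g x = C * max (1 - γ * |x| ^ α) 0 ^ (1/(q - 1)))
    (hg_dens : ∫ x, g x = 1) :
    q * (∫ x, |x| ^ α * g x) ^ (1/α) *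
      ((∫ x, g x ^ (β * (q - 1) + 1) * |deriv g x / g x| ^ β) /
        (∫ x, g x ^ q) ^ β) ^ (1/β) = 1 := by
  have hq1 : (0:ℝ) < q - 1 := by linarith
  set p : ℝ := 1/(q-1) with hp
  have hp0 : 0 < p := by positivity
  have hpq : p * (q-1) = 1 := by rw [hp]; field_simp
  have hpq1 : p * q = 1 + p := by rw [hp]; field_simp; ring
  have hα0 : (0:ℝ) < α := by linarith
  have hβ0 : (0:ℝ) < β := by linarith
  have hβα : β * (α - 1) = α := by
    have h1 : β + α = α * β := by
      field_simp at hconj; linarith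
    nlinarith
  set R : ℝ := γ ^ (-(1/α)) with hRdef
  have hR0 : 0 < R := Real.rpow_pos_of_pos hγ _
  have hRα : γ * R ^ α = 1 := by
    rw [hRdef, ← Real.rpow_mul hγ.le]
    rw [show -(1/α) * α = -1 by field_simp, Real.rpow_neg_one, mul_inv_cancel₀ hγ.ne']
  have hg_zero : ∀ x : ℝ, R ≤ |x| → g x = 0 := by
    intro x hx
    have h1 : R ^ α ≤ |x| ^ α := Real.rpow_le_rpow hR0.le hx hα0.le
    have h2 : 1 - γ * |x| ^ α ≤ 0 := by nlinarith
    rw [hg_def, max_eq_right h2, Real.zero_rpow hp0.ne', mul_zero]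
  have hu_pos : ∀ x : ℝ, |x| < R → 0 < 1 - γ * |x| ^ α := by
    intro x hx
    have h1 : |x| ^ α < R ^ α := Real.rpow_lt_rpow (abs_nonneg x) hx hα0
    nlinarith
  have hg_nonneg : ∀ x, 0 ≤ g x := by
    intro x; rw [hg_def]; positivity
  have hg_pos : ∀ x : ℝ, |x| < R → 0 < g x := by
    intro x hx
    rw [hg_def, max_eq_left (hu_pos x hx).le]
    exact mul_pos hC (Real.rpow_pos_of_pos (hu_pos x hx) p)
  have hcont_abs : Continuous (fun x : ℝ => |x| ^ α) := by
    rw [continuous_iff_continuousAt]; intro x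
    exact (Real.continuousAt_rpow_const _ _ (Or.inr hα0.le)).comp continuous_abs.continuousAt
  have hu_cont : Continuous (fun x : ℝ => 1 - γ * |x| ^ α) :=
    continuous_const.sub (continuous_const.mul hcont_abs)
  have hψp_cont : Continuous (fun t : ℝ => max t 0 ^ p) := by
    rw [continuous_iff_continuousAt]; intro t
    exact (Real.continuousAt_rpow_const _ _ (Or.inr hp0.le)).comp
      ((continuous_id.max continuous_const).continuousAt)
  have hg_cont : Continuous g := by
    have h1 : g = fun x => C * max (1 - γ * |x| ^ α) 0 ^ p := funext hg_def
    rw [h1]; exact continuous_const.mul (hψp_cont.comp hu_cont)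
  have hgcs : HasCompactSupport g := by
    apply HasCompactSupport.intro (isCompact_Icc (a := -R) (b := R))
    intro x hx
    simp only [Set.mem_Icc, not_and_or, not_le] at hx
    apply hg_zero
    rcases hx with h | h
    · exact le_abs.mpr (Or.inr (by linarith))
    · exact le_abs.mpr (Or.inl h.le)
  have hg_int : Integrable g := hg_cont.integrable_of_hasCompactSupport hgcs
  have hf1_int : Integrable (fun x : ℝ => |x| ^ α * g x) :=
    (hcont_abs.mul hg_cont).integrable_of_hasCompactSupport hgcs.mul_left
  set E : ℝ := ∫ x, |x| ^ α * g x with hE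
  have hEpos : 0 < E := by
    rw [hE, integral_pos_iff_support_of_nonneg
      (fun x => mul_nonneg (Real.rpow_nonneg (abs_nonneg x) α) (hg_nonneg x)) hf1_int]
    have hsub : Set.Ioo (R/2) R ⊆ Function.support (fun x : ℝ => |x| ^ α * g x) := by
      intro x hx
      simp only [Set.mem_Ioo] at hx
      have hx0 : 0 < x := by linarith
      have hxR : |x| < R := by rw [abs_of_pos hx0]; exact hx.2
      have h2 : 0 < |x| ^ α * g x :=
        mul_pos (Real.rpow_pos_of_pos (abs_pos.mpr hx0.ne') α) (hg_pos x hxR)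
      exact Function.mem_support.mpr h2.ne'
    calc (0 : ENNReal) < volume (Set.Ioo (R/2) R) := by
          rw [Real.volume_Ioo]; exact ENNReal.ofReal_pos.mpr (by linarith)
      _ ≤ volume (Function.support fun x : ℝ => |x| ^ α * g x) := measure_mono hsub
  set K : ℝ := C ^ (q-1) * p * γ * α with hKdef
  have hK0 : 0 < K := by
    rw [hKdef]
    have := Real.rpow_pos_of_pos hC (q-1)
    positivity
  have hgq : ∀ x, g x ^ q = C ^ (q-1) * (g x - γ * (|x| ^ α * g x)) := by
    intro x
    rcases lt_or_ge |x| R with hx | hx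
    · have hu := hu_pos x hx
      rw [hg_def, max_eq_left hu.le]
      rw [Real.mul_rpow hC.le (Real.rpow_nonneg hu.le p), ← Real.rpow_mul hu.le, hpq1,
        Real.rpow_add hu, Real.rpow_one]
      have hCq : C ^ q = C ^ (q-1) * C := by
        rw [← Real.rpow_add_one hC.ne' (q-1), sub_add_cancel]
      rw [hCq]; ring
    · rw [hg_zero x hx, Real.zero_rpow (by linarith : q ≠ 0)]; ring
  have hgq_int : Integrable (fun x => g x ^ q) := by
    have h1 : (fun x => g x ^ q) = fun x => C ^ (q-1) * (g x - γ * (|x| ^ α * g x)) :=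
      funext hgq
    rw [h1]
    exact (hg_int.sub (hf1_int.const_mul γ)).const_mul _
  -- derivative machinery
  have hu' : ∀ x : ℝ, HasDerivAt (fun y : ℝ => 1 - γ * |y| ^ α)
      (-(γ * (α * max x 0 ^ (α - 1) - α * max (-x) 0 ^ (α - 1)))) x := by
    intro x
    have h1 := ((abs_rpow_hasDerivAt hα x).const_mul γ).const_sub 1
    simpa using h1
  have hgq_eq : ∀ x, g x ^ q = C ^ q * max (1 - γ * |x| ^ α) 0 ^ (p+1) := by
    intro x
    rw [hg_def, Real.mul_rpow hC.le (Real.rpow_nonneg (le_max_right _ _) p),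
      ← Real.rpow_mul (le_max_right _ _), hpq1, add_comm]
  have hxD : ∀ x : ℝ, x * (α * max x 0 ^ (α - 1) - α * max (-x) 0 ^ (α - 1)) = α * |x| ^ α := by
    intro x
    rcases lt_trichotomy x 0 with h | h | h
    · rw [max_eq_right h.le, max_eq_left (by linarith : (0:ℝ) ≤ -x),
        Real.zero_rpow (by linarith : α - 1 ≠ 0), abs_of_neg h]
      rw [show (-x : ℝ) ^ α = (-x) ^ (α - 1) * (-x) by
        rw [← Real.rpow_add_one (by linarith : (-x : ℝ) ≠ 0), sub_add_cancel]]
      ring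
    · subst h; rw [abs_zero, Real.zero_rpow hα0.ne', mul_zero, zero_mul]
    · rw [max_eq_left h.le, max_eq_right (by linarith : -x ≤ 0),
        Real.zero_rpow (by linarith : α - 1 ≠ 0), abs_of_pos h]
      rw [show (x : ℝ) ^ α = x ^ (α - 1) * x by
        rw [← Real.rpow_add_one h.ne', sub_add_cancel]]
      ring
  have hφ : ∀ x : ℝ, HasDerivAt (fun y => y * g y ^ q)
      (g x ^ q - q * K * (|x| ^ α * g x)) x := by
    intro x
    have hψ := psi_hasDerivAt (show (1:ℝ) < p + 1 by linarith) (1 - γ * |x| ^ α)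
    have h1 : HasDerivAt (fun y => g y ^ q)
        (C ^ q * ((p+1) * max (1 - γ * |x| ^ α) 0 ^ p) *
          (-(γ * (α * max x 0 ^ (α - 1) - α * max (-x) 0 ^ (α - 1))))) x := by
      refine HasDerivAt.congr_of_eventuallyEq ?_ (Filter.Eventually.of_forall fun y => hgq_eq y)
      have h2 := (hψ.comp x (hu' x)).const_mul (C ^ q)
      have h3 : HasDerivAt (fun y => C ^ q * max (1 - γ * |y| ^ α) 0 ^ (p+1))
          (C ^ q * ((p+1) * max (1 - γ * |x| ^ α) 0 ^ (p+1-1) *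
            (-(γ * (α * max x 0 ^ (α - 1) - α * max (-x) 0 ^ (α - 1)))))) x := by
        simpa [Function.comp] using h2
      rw [add_sub_cancel_right] at h3
      exact h3.congr_deriv (by ring)
    have h2 := (hasDerivAt_id' (x := x)).mul h1
    have hCg : C ^ q * max (1 - γ * |x| ^ α) 0 ^ p = C ^ (q-1) * g x := by
      rw [hg_def, show C ^ q = C ^ (q-1) * C from by
        rw [← Real.rpow_add_one hC.ne' (q-1), sub_add_cancel]]
      ring
    have key : g x ^ q - q * K * (|x| ^ α * g x) =
        1 * g x ^ q + x * (C ^ q * ((p+1) * max (1 - γ * |x| ^ α) 0 ^ p) *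
          (-(γ * (α * max x 0 ^ (α - 1) - α * max (-x) 0 ^ (α - 1))))) := by
      have h4 : x * (C ^ q * ((p+1) * max (1 - γ * |x| ^ α) 0 ^ p) *
          (-(γ * (α * max x 0 ^ (α - 1) - α * max (-x) 0 ^ (α - 1))))) =
          -((p+1) * γ * (C ^ q * max (1 - γ * |x| ^ α) 0 ^ p) *
            (x * (α * max x 0 ^ (α - 1) - α * max (-x) 0 ^ (α - 1)))) := by ring
      rw [one_mul, h4, hCg, hxD]
      have h5 : q * K = (p+1) * γ * C ^ (q-1) * α := by
        rw [hKdef]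
        have h6 : q * p = p + 1 := by rw [hp]; field_simp; ring
        linear_combination (C ^ (q-1) * γ * α) * h6
      rw [h5]; ring
    rw [key]
    exact h2
  have hG_int : Integrable (fun x => g x ^ q - q * K * (|x| ^ α * g x)) :=
    hgq_int.sub (hf1_int.const_mul _)
  have hG_zero : ∀ x ∉ Set.Ioc (-(R+1)) (R+1), g x ^ q - q * K * (|x| ^ α * g x) = 0 := by
    intro x hx
    simp only [Set.mem_Ioc, not_and_or, not_lt, not_le] at hx
    have hgx : g x = 0 := by
      apply hg_zero
      rcases hx with h | h
      · exact le_abs.mpr (Or.inr (by linarith))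
      · exact le_abs.mpr (Or.inl (by linarith))
    rw [hgx, Real.zero_rpow (by linarith : q ≠ 0)]; ring
  have hGint0 : ∫ x, (g x ^ q - q * K * (|x| ^ α * g x)) = 0 := by
    have hab : -(R+1) ≤ R+1 := by linarith
    rw [← setIntegral_eq_integral_of_forall_compl_eq_zero hG_zero,
      ← intervalIntegral.integral_of_le hab,
      intervalIntegral.integral_eq_sub_of_hasDerivAt (fun x _ => hφ x)
        hG_int.intervalIntegrable]
    have h1 : g (R+1) = 0 := hg_zero _ (by rw [abs_of_pos (by linarith : (0:ℝ) < R+1)]; linarith)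
    have h2 : g (-(R+1)) = 0 := hg_zero _ (by rw [abs_neg, abs_of_pos (by linarith : (0:ℝ) < R+1)]; linarith)
    rw [h1, h2, Real.zero_rpow (by linarith : q ≠ 0)]; ring
  have hM2 : ∫ x, g x ^ q = q * K * E := by
    rw [integral_sub hgq_int (hf1_int.const_mul _), integral_const_mul, ← hE] at hGint0
    linarith
  have hMpos : 0 < ∫ x, g x ^ q := by
    rw [hM2]; exact mul_pos (mul_pos (by linarith) hK0) hEpos
  have hDabs : ∀ x : ℝ, x ≠ 0 →
      |α * max x 0 ^ (α - 1) - α * max (-x) 0 ^ (α - 1)| = α * |x| ^ (α - 1) := by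
    intro x hx
    rcases lt_or_gt_of_ne hx with h | h
    · rw [max_eq_right h.le, max_eq_left (by linarith : (0:ℝ) ≤ -x),
        Real.zero_rpow (show α - 1 ≠ 0 from ne_of_gt (by linarith)), mul_zero, zero_sub,
        abs_neg, abs_of_neg h]
      rw [abs_of_nonneg (mul_nonneg hα0.le (Real.rpow_nonneg (by linarith) _))]
    · rw [max_eq_left h.le, max_eq_right (by linarith : -x ≤ 0),
        Real.zero_rpow (show α - 1 ≠ 0 from ne_of_gt (by linarith)), mul_zero, sub_zero,
        abs_of_pos h]
      rw [abs_of_nonneg (mul_nonneg hα0.le (Real.rpow_nonneg h.le _))]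
  have hae : (fun x => g x ^ (β * (q - 1) + 1) * |deriv g x / g x| ^ β)
      =ᵐ[volume] fun x => K ^ β * (|x| ^ α * g x) := by
    have hS : volume ({-R, 0, R} : Set ℝ) = 0 :=
      Set.Countable.measure_zero (Set.toFinite _).countable volume
    filter_upwards [measure_eq_zero_iff_ae_notMem.mp hS] with x hx
    simp only [Set.mem_insert_iff, Set.mem_singleton_iff, not_or] at hx
    obtain ⟨hx1, hx2, hx3⟩ := hx
    rcases lt_trichotomy |x| R with h | h | h
    · -- interior point, x ≠ 0
      have hu := hu_pos x h
      have hev : g =ᶠ[nhds x] fun y => C * (1 - γ * |y| ^ α) ^ p := by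
        filter_upwards [hu_cont.continuousAt.preimage_mem_nhds (Ioi_mem_nhds hu)] with y hy
        rw [hg_def, max_eq_left (le_of_lt hy)]
      have hder : HasDerivAt g
          (C * (p * (1 - γ * |x| ^ α) ^ (p-1) *
            (-(γ * (α * max x 0 ^ (α - 1) - α * max (-x) 0 ^ (α - 1)))))) x := by
        refine HasDerivAt.congr_of_eventuallyEq ?_ hev
        have h6 := ((Real.hasDerivAt_rpow_const (x := 1 - γ * |x| ^ α) (p := p)
          (Or.inl hu.ne')).comp x (hu' x)).const_mul C
        simpa [Function.comp, mul_assoc] using h6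
      rw [hder.deriv]
      rw [hg_def, max_eq_left hu.le]
      set u : ℝ := 1 - γ * |x| ^ α with hu_def
      have hxabs : 0 < |x| := abs_pos.mpr hx2
      have h7 : C * (p * u ^ (p-1) *
          (-(γ * (α * max x 0 ^ (α - 1) - α * max (-x) 0 ^ (α - 1))))) / (C * u ^ p) =
          -(p * γ * (α * max x 0 ^ (α - 1) - α * max (-x) 0 ^ (α - 1)) / u) := by
        rw [Real.rpow_sub hu, Real.rpow_one]
        have hup : u ^ p ≠ 0 := (Real.rpow_pos_of_pos hu p).ne'
        field_simp
      rw [h7, abs_neg, abs_div, abs_of_pos hu, abs_mul, abs_mul,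
        abs_of_pos hp0, abs_of_pos hγ, hDabs x hx2]
      -- now pure rpow algebra
      have e1 : (C * u ^ p) ^ (β * (q-1) + 1) = C ^ (β * (q-1) + 1) * u ^ (β + p) := by
        rw [Real.mul_rpow hC.le (Real.rpow_nonneg hu.le p), ← Real.rpow_mul hu.le]
        congr 1
        rw [show p * (β * (q-1) + 1) = β * (p * (q-1)) + p by ring, hpq, mul_one]
      have e2 : (p * γ * (α * |x| ^ (α-1)) / u) ^ β =
          (p * γ * α) ^ β * |x| ^ α / u ^ β := by
        rw [Real.div_rpow (by positivity) hu.le]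
        congr 1
        rw [show p * γ * (α * |x| ^ (α-1)) = p * γ * α * |x| ^ (α-1) by ring,
          Real.mul_rpow (by positivity) (Real.rpow_nonneg (abs_nonneg x) _),
          ← Real.rpow_mul (abs_nonneg x), show (α - 1) * β = α by linarith [hβα]]
      rw [e1, e2]
      have e3 : C ^ (β * (q-1) + 1) = (C ^ (q-1)) ^ β * C := by
        rw [← Real.rpow_mul hC.le, ← Real.rpow_add_one hC.ne']
        congr 1; ring
      have e4 : u ^ (β + p) = u ^ β * u ^ p := Real.rpow_add hu β p
      have e5 : K ^ β = (C ^ (q-1)) ^ β * (p * γ * α) ^ β := by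
        rw [hKdef, show C ^ (q-1) * p * γ * α = C ^ (q-1) * (p * γ * α) by ring,
          Real.mul_rpow (Real.rpow_nonneg hC.le _) (by positivity)]
      rw [e3, e4, e5]
      have huβ : u ^ β ≠ 0 := (Real.rpow_pos_of_pos hu β).ne'
      field_simp
    · exact absurd (abs_eq hR0.le |>.mp h) (by push_neg; exact ⟨hx3, hx1⟩)
    · have hgx : g x = 0 := hg_zero x h.le
      have hd0 : deriv g x = 0 := by
        have hev : g =ᶠ[nhds x] fun _ => (0:ℝ) := by
          filter_upwards [continuous_abs.continuousAt.preimage_mem_nhds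
            (Ioi_mem_nhds h)] with y hy
          exact hg_zero y (le_of_lt hy)
        rw [hev.deriv_eq]; exact deriv_const x 0
      rw [hgx, hd0]
      have hb1 : (0:ℝ) < β * (q-1) + 1 := by nlinarith
      rw [Real.zero_rpow hb1.ne']
      simp
  rw [integral_congr_ae hae, integral_const_mul, ← hE, hM2]
  -- final algebra
  have hqKE : 0 < q * K * E := mul_pos (mul_pos (by linarith) hK0) hEpos
  have h9 : K ^ β * E / (q * K * E) ^ β = (K * E ^ (1/β) / (q * K * E)) ^ β := by
    rw [Real.div_rpow (by positivity) hqKE.le,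
      Real.mul_rpow hK0.le (Real.rpow_nonneg hEpos.le _),
      ← Real.rpow_mul hEpos.le, one_div_mul_cancel hβ0.ne', Real.rpow_one]
  have h10 : ((K * E ^ (1/β) / (q * K * E)) ^ β) ^ (1/β) = K * E ^ (1/β) / (q * K * E) := by
    rw [← Real.rpow_mul
      (div_nonneg (mul_nonneg hK0.le (Real.rpow_nonneg hEpos.le _)) hqKE.le),
      mul_one_div_cancel hβ0.ne', Real.rpow_one]
  rw [h9, h10]
  have h11 : E ^ (1/α) * E ^ (1/β) = E := by
    rw [← Real.rpow_add hEpos, hconj, Real.rpow_one]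
  have h12 : q * E ^ (1/α) * (K * E ^ (1/β) / (q * K * E)) =
      q * K * (E ^ (1/α) * E ^ (1/β)) / (q * K * E) := by ring
  rw [h12, h11, div_self hqKE.ne']
end

section
/- Generalized q-Gaussians minimize generalized Fisher information under a moment constraint (1D): among all C¹ strictly positive probability densities g on ℝ with fixed moment m_α = E_g[|X|^α] and finite M_q[g] (and satisfying the decay hypotheses of the q-Cramér-Rao inequality), the generalized Fisher information I_{β,q}[g] is bounded below by I_{β,q}[G] where G is the generalized q-Gaussian with moment m_α, i.e., I_{β,q}[g] ≥ (q^β m_α^{β/α})^{−1}. -/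
open MeasureTheory

/-- A nonnegative a.e.-strongly-measurable function whose `p`-th power is integrable
is in `ℒp`. -/
lemma memLp_of_integrable_rpow_aux {u : ℝ → ℝ} {p : ℝ} (hp : 0 < p)
    (hu : AEStronglyMeasurable u (volume : Measure ℝ)) (hnn : ∀ x, 0 ≤ u x)
    (hi : Integrable (fun x => u x ^ p)) : MemLp u (ENNReal.ofReal p) := by
  have hp0 : ENNReal.ofReal p ≠ 0 := by
    simp [ENNReal.ofReal_eq_zero, not_le, hp]
  have hptop : ENNReal.ofReal p ≠ ⊤ := ENNReal.ofReal_ne_top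
  have h := (memLp_norm_rpow_iff (q := ENNReal.ofReal p) (p := ENNReal.ofReal p) hu hp0 hptop)
  rw [ENNReal.div_self hp0 hptop] at h
  refine h.mp ?_
  rw [memLp_one_iff_integrable]
  have heq : (fun x => ‖u x‖ ^ (ENNReal.ofReal p).toReal) = fun x => u x ^ p := by
    funext x
    rw [Real.norm_of_nonneg (hnn x), ENNReal.toReal_ofReal hp.le]
  rw [heq]
  exact hi

/-- Among C¹ strictly positive densities on ℝ with fixed moment
m_α = E_g[|X|^α], the generalized Fisher information satisfies
I_{β,q}[g] ≥ (q^β m_α^{β/α})⁻¹, the bound being the value at the generalized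
q-Gaussian with moment m_α. -/
theorem q_gaussian_minimizes_fisher_info
    (g : ℝ → ℝ) (q α β mα : ℝ)
    (hq : 1 < q) (hα : 1 < α) (hβ : β = α / (α - 1)) (hmα : 0 < mα)
    (hg_pos : ∀ x, 0 < g x)
    (hg_smooth : ContDiff ℝ 1 g)
    (hg_dens : ∫ x, g x = 1)
    (hMq_int : Integrable (fun x => g x ^ q))
    (h_decay_top : Filter.Tendsto (fun x => x * g x ^ q) Filter.atTop (nhds 0))
    (h_decay_bot : Filter.Tendsto (fun x => x * g x ^ q) Filter.atBot (nhds 0))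
    (h_mom_int : Integrable (fun x => |x| ^ α * g x))
    (h_mom : ∫ x, |x| ^ α * g x = mα)
    (h_fish_int : Integrable (fun x =>
      g x ^ (β * (q - 1) + 1) * |deriv g x / g x| ^ β)) :
    (∫ x, g x ^ (β * (q - 1) + 1) * |deriv g x / g x| ^ β) /
      (∫ x, g x ^ q) ^ β ≥ (q ^ β * mα ^ (β / α))⁻¹ := by
  have hα0 : (0:ℝ) < α := lt_trans one_pos hα
  have hα1 : α - 1 ≠ 0 := sub_ne_zero.mpr (ne_of_gt hα)
  have hαne : α ≠ 0 := ne_of_gt hα0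
  have hβ1 : 1 < β := by
    rw [hβ, lt_div_iff₀ (by linarith)]; linarith
  have hβ0 : (0:ℝ) < β := lt_trans one_pos hβ1
  have hβne : β ≠ 0 := ne_of_gt hβ0
  have hq0 : (0:ℝ) < q := lt_trans one_pos hq
  have hconj : Real.HolderConjugate α β := by
    refine Real.holderConjugate_iff.mpr ⟨hα, ?_⟩
    rw [hβ]; field_simp; ring
  have hβα : β * α⁻¹ = β - 1 := by
    rw [hβ]; field_simp; ring
  -- the two Hölder factors
  set f1 : ℝ → ℝ := fun x => |x| * g x ^ (α⁻¹) with hf1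
  set f2 : ℝ → ℝ := fun x => g x ^ (q - 1 - α⁻¹) * |deriv g x| with hf2
  have hgc : Continuous g := hg_smooth.continuous
  have hgc' : Continuous (deriv g) := hg_smooth.continuous_deriv le_rfl
  have hf1c : Continuous f1 :=
    continuous_abs.mul (hgc.rpow_const fun x => Or.inl (ne_of_gt (hg_pos x)))
  have hf2c : Continuous f2 :=
    (hgc.rpow_const fun x => Or.inl (ne_of_gt (hg_pos x))).mul hgc'.abs
  have hf1nn : ∀ x, 0 ≤ f1 x := fun x =>
    mul_nonneg (abs_nonneg _) (Real.rpow_nonneg (hg_pos x).le _)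
  have hf2nn : ∀ x, 0 ≤ f2 x := fun x =>
    mul_nonneg (Real.rpow_nonneg (hg_pos x).le _) (abs_nonneg _)
  -- powers of the factors
  have hf1pow : ∀ x, f1 x ^ α = |x| ^ α * g x := by
    intro x
    rw [hf1, Real.mul_rpow (abs_nonneg x) (Real.rpow_nonneg (hg_pos x).le _),
      ← Real.rpow_mul (hg_pos x).le, inv_mul_cancel₀ hαne, Real.rpow_one]
  have hf2pow : ∀ x, f2 x ^ β = g x ^ (β * (q - 1) + 1) * |deriv g x / g x| ^ β := by
    intro x
    have hgx := hg_pos x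
    rw [hf2, Real.mul_rpow (Real.rpow_nonneg hgx.le _) (abs_nonneg _),
      ← Real.rpow_mul hgx.le, abs_div, abs_of_pos hgx,
      Real.div_rpow (abs_nonneg _) hgx.le]
    rw [mul_div_assoc', mul_comm (g x ^ (β * (q - 1) + 1)) (|deriv g x| ^ β),
      mul_div_assoc, ← Real.rpow_sub hgx]
    have : (q - 1 - α⁻¹) * β = β * (q - 1) + 1 - β := by
      have := hβα; nlinarith [hβα]
    rw [this, mul_comm]
  -- membership in ℒα and ℒβ
  have hmem1 : MemLp f1 (ENNReal.ofReal α) := by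
    refine memLp_of_integrable_rpow_aux hα0 hf1c.aestronglyMeasurable hf1nn ?_
    have : (fun x => f1 x ^ α) = fun x => |x| ^ α * g x := funext hf1pow
    rw [this]; exact h_mom_int
  have hmem2 : MemLp f2 (ENNReal.ofReal β) := by
    refine memLp_of_integrable_rpow_aux hβ0 hf2c.aestronglyMeasurable hf2nn ?_
    have : (fun x => f2 x ^ β)
        = fun x => g x ^ (β * (q - 1) + 1) * |deriv g x / g x| ^ β := funext hf2pow
    rw [this]; exact h_fish_int
  -- the product f1 * f2 is integrable (Hölder)
  have hprod_int : Integrable (fun x => f1 x * f2 x) := by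
    have h1 : (1 : ENNReal) / 1 = 1 / ENNReal.ofReal α + 1 / ENNReal.ofReal β := by
      rw [one_div, one_div, one_div, inv_one,
        ← ENNReal.ofReal_inv_of_pos hα0, ← ENNReal.ofReal_inv_of_pos hβ0,
        ← ENNReal.ofReal_add (by positivity) (by positivity), hconj.inv_add_inv_eq_one,
        ENNReal.ofReal_one]
    have := (hmem2.smul (φ := f1) hmem1 (hpqr := (⟨by simpa only [one_div, inv_one] using h1.symm⟩ : ENNReal.HolderTriple (ENNReal.ofReal α) (ENNReal.ofReal β) 1)) : MemLp (f1 • f2) 1)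
    rw [memLp_one_iff_integrable] at this
    exact this
  -- pointwise identity : f1 * f2 = |x| * g^{q-1} * |g'|
  have hprod_eq : ∀ x, f1 x * f2 x = |x| * g x ^ (q - 1) * |deriv g x| := by
    intro x
    rw [hf1, hf2]
    rw [show |x| * g x ^ α⁻¹ * (g x ^ (q - 1 - α⁻¹) * |deriv g x|)
        = |x| * (g x ^ α⁻¹ * g x ^ (q - 1 - α⁻¹)) * |deriv g x| by ring,
      ← Real.rpow_add (hg_pos x)]
    ring_nf
  -- integration by parts : ∫ g^q = - ∫ x * (g^q)'
  set v' : ℝ → ℝ := fun x => deriv g x * q * g x ^ (q - 1) with hv'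
  have hu : ∀ x : ℝ, HasDerivAt (fun y : ℝ => y) 1 x := fun x => hasDerivAt_id x
  have hv : ∀ x : ℝ, HasDerivAt (fun y => g y ^ q) (v' x) x := by
    intro x
    exact ((hg_smooth.differentiable one_ne_zero x).hasDerivAt).rpow_const
      (Or.inl (ne_of_gt (hg_pos x)))
  have huv'_int : Integrable (fun x : ℝ => x * v' x) := by
    refine Integrable.mono' (hprod_int.const_mul q)
      ((continuous_id.mul ((hgc'.mul continuous_const).mul
        (hgc.rpow_const fun x => Or.inl (ne_of_gt (hg_pos x))))).aestronglyMeasurable) ?_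
    filter_upwards with x
    rw [Real.norm_eq_abs, hv']
    have : |x * (deriv g x * q * g x ^ (q - 1))|
        = q * (|x| * g x ^ (q - 1) * |deriv g x|) := by
      rw [abs_mul, abs_mul, abs_mul, abs_of_pos hq0,
        abs_of_nonneg (Real.rpow_nonneg (hg_pos x).le _)]
      ring
    rw [this, hprod_eq x]
  have hIBP : ∫ x : ℝ, x * v' x = 0 - 0 - ∫ x : ℝ, 1 * g x ^ q := by
    refine integral_mul_deriv_eq_deriv_mul (fun x _ => hu x) (fun x _ => hv x) huv'_int ?_ ?_ ?_
    · exact hMq_int.congr (Filter.Eventually.of_forall fun x => by simp)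
    · exact h_decay_bot
    · exact h_decay_top
  set M : ℝ := ∫ x, g x ^ q with hM
  set J : ℝ := ∫ x, g x ^ (β * (q - 1) + 1) * |deriv g x / g x| ^ β with hJ
  have hJnn : 0 ≤ J :=
    integral_nonneg fun x => mul_nonneg (Real.rpow_nonneg (hg_pos x).le _)
      (Real.rpow_nonneg (abs_nonneg _) _)
  have hMpos : 0 < M := by
    rw [hM]
    refine (integral_pos_iff_support_of_nonneg
      (fun x => Real.rpow_nonneg (hg_pos x).le _) hMq_int).mpr ?_
    have : Function.support (fun x => g x ^ q) = Set.univ := by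
      ext x
      simp [Function.mem_support, Real.rpow_eq_zero_iff_of_nonneg (hg_pos x).le,
        ne_of_gt (hg_pos x)]
    rw [this]
    simp
  -- M ≤ q * ∫ f1 f2
  have hM_le : M ≤ q * ∫ x, f1 x * f2 x := by
    have h1 : M = - ∫ x : ℝ, x * v' x := by
      rw [hIBP]; simp [hM]
    have h2 : - ∫ x : ℝ, x * v' x ≤ ∫ x : ℝ, |x * v' x| := by
      calc - ∫ x : ℝ, x * v' x ≤ |∫ x : ℝ, x * v' x| := neg_le_abs _
        _ ≤ ∫ x : ℝ, |x * v' x| := by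
            have h := norm_integral_le_integral_norm (μ := (volume : Measure ℝ))
              (fun x : ℝ => x * v' x)
            simp only [Real.norm_eq_abs] at h
            exact h
    have h3 : ∫ x : ℝ, |x * v' x| = q * ∫ x, f1 x * f2 x := by
      rw [← integral_const_mul]
      refine integral_congr_ae (Filter.Eventually.of_forall fun x => ?_)
      show |x * (deriv g x * q * g x ^ (q - 1))| = q * (f1 x * f2 x)
      rw [hprod_eq x, abs_mul, abs_mul, abs_mul, abs_of_pos hq0,
        abs_of_nonneg (Real.rpow_nonneg (hg_pos x).le _)]
      ring
    rw [h1]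
    calc - ∫ x : ℝ, x * v' x ≤ ∫ x : ℝ, |x * v' x| := h2
      _ = q * ∫ x, f1 x * f2 x := h3
  -- Hölder
  have hHolder : ∫ x, f1 x * f2 x ≤ mα ^ α⁻¹ * J ^ β⁻¹ := by
    have := integral_mul_le_Lp_mul_Lq_of_nonneg (μ := volume) hconj
      (Filter.Eventually.of_forall hf1nn) (Filter.Eventually.of_forall hf2nn) hmem1 hmem2
    have e1 : ∫ x, f1 x ^ α = mα := by
      rw [← h_mom]
      exact integral_congr_ae (Filter.Eventually.of_forall fun x => hf1pow x)
    have e2 : ∫ x, f2 x ^ β = J := by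
      rw [hJ]
      exact integral_congr_ae (Filter.Eventually.of_forall fun x => hf2pow x)
    rw [e1, e2, one_div, one_div] at this
    exact this
  have hkey : M ≤ q * mα ^ α⁻¹ * J ^ β⁻¹ := by
    calc M ≤ q * ∫ x, f1 x * f2 x := hM_le
      _ ≤ q * (mα ^ α⁻¹ * J ^ β⁻¹) := by
          exact mul_le_mul_of_nonneg_left hHolder hq0.le
      _ = q * mα ^ α⁻¹ * J ^ β⁻¹ := by ring
  -- J > 0
  have hJpos : 0 < J := by
    rcases lt_or_eq_of_le hJnn with h | h
    · exact h
    · exfalso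
      rw [← h, Real.zero_rpow (inv_ne_zero hβne), mul_zero] at hkey
      linarith
  -- raise to the power β
  have hCpos : 0 < q ^ β * mα ^ (β / α) := by
    have := Real.rpow_pos_of_pos hq0 β
    have := Real.rpow_pos_of_pos hmα (β / α)
    positivity
  have hMβ : M ^ β ≤ q ^ β * mα ^ (β / α) * J := by
    calc M ^ β ≤ (q * mα ^ α⁻¹ * J ^ β⁻¹) ^ β :=
          Real.rpow_le_rpow hMpos.le hkey hβ0.le
      _ = q ^ β * mα ^ (β / α) * J := by
          rw [Real.mul_rpow (by positivity) (Real.rpow_nonneg hJnn _),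
            Real.mul_rpow hq0.le (Real.rpow_nonneg hmα.le _),
            ← Real.rpow_mul hmα.le, ← Real.rpow_mul hJnn,
            inv_mul_cancel₀ hβne, Real.rpow_one]
          congr 2
          rw [div_eq_mul_inv, mul_comm]
  -- conclude
  rw [ge_iff_le, le_div_iff₀ (Real.rpow_pos_of_pos hMpos β)]
  calc (q ^ β * mα ^ (β / α))⁻¹ * M ^ β
      ≤ (q ^ β * mα ^ (β / α))⁻¹ * (q ^ β * mα ^ (β / α) * J) :=
        mul_le_mul_of_nonneg_left hMβ (by positivity)
    _ = J := by field_simp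
end
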